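/- For finite groups G and H, a field K, and finite-dimensional modules M, M' over K[G] and N, N' over K[H], there is a K-linear isomorphism Hom_{K[G×H]}(M ⊗_K N, M' ⊗_K N') ≅ Hom_{K[G]}(M, M') ⊗_K Hom_{K[H]}(N, N'), where K is a splitting field for the relevant endomorphism rings (e.g. K is such that End of each indecomposable summand modulo radical is K). -/

import Mathlib

/-!
STATEMENT 3: For finite groups `G`, `H`, a field `K`, and finite-dimensional modules
`M, M'` over `K[G]` and `N, N'` over `K[H]`, there is a `K`-linear isomorphism
`Hom_{K[G×H]}(M ⊗[K] N, M' ⊗[K] N') ≅ Hom_{K[G]}(M, M') ⊗[K] Hom_{K[H]}(N, N')`.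

Modules over `K[G]` are presented as representations of `G`; the space of `K[G]`-module
homomorphisms is the space of `G`-equivariant `K`-linear maps.
-/

open TensorProduct

noncomputable section

/-- The outer tensor product of representations of `G` and `H`. -/
def outerRep {K G H V W : Type} [Field K] [Monoid G] [Monoid H]
    [AddCommMonoid V] [Module K V] [AddCommMonoid W] [Module K W]
    (ρ : Representation K G V) (τ : Representation K H W) :
    Representation K (G × H) (V ⊗[K] W) :=
  Representation.tprod (ρ.comp (MonoidHom.fst G H)) (τ.comp (MonoidHom.snd G H))

/-- The `K`-vector space of `G`-equivariant `K`-linear maps between two representations,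
i.e. the space of module homomorphisms over the group algebra `K[G]`. -/
def equivariantHom {K G V W : Type} [Field K] [Monoid G]
    [AddCommMonoid V] [Module K V] [AddCommMonoid W] [Module K W]
    (ρ : Representation K G V) (τ : Representation K G W) : Submodule K (V →ₗ[K] W) where
  carrier := {f | ∀ g, f.comp (ρ g) = (τ g).comp f}
  add_mem' := by
    intro f h hf hh g
    rw [LinearMap.add_comp, LinearMap.comp_add, hf g, hh g]
  zero_mem' := by
    intro g
    simp
  smul_mem' := by
    intro c f hf g
    rw [LinearMap.smul_comp, LinearMap.comp_smul, hf g]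

namespace HomOuterAux

variable {K : Type} [Field K]

lemma mem_equivariantHom' {G V W : Type} [Monoid G]
    [AddCommMonoid V] [Module K V] [AddCommMonoid W] [Module K W]
    (ρ : Representation K G V) (τ : Representation K G W) (f : V →ₗ[K] W) :
    True := trivial

/-- Tensor with a basis on the right factor. -/
def tbr {M B ι : Type} [AddCommGroup M] [Module K M] [AddCommGroup B] [Module K B]
    [DecidableEq ι] (b : Module.Basis ι K B) : M ⊗[K] B ≃ₗ[K] (ι →₀ M) :=
  (TensorProduct.congr (LinearEquiv.refl K M) b.repr).trans
    (TensorProduct.finsuppScalarRight K K M ι)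

lemma tbr_tmul_apply {M B ι : Type} [AddCommGroup M] [Module K M] [AddCommGroup B]
    [Module K B] [DecidableEq ι] (b : Module.Basis ι K B) (m : M) (v : B) (i : ι) :
    tbr b (m ⊗ₜ[K] v) i = b.repr v i • m := by
  simp [tbr]

lemma tbr_rTensor {M N B ι : Type} [AddCommGroup M] [Module K M] [AddCommGroup N]
    [Module K N] [AddCommGroup B] [Module K B] [DecidableEq ι] (b : Module.Basis ι K B)
    (L : M →ₗ[K] N) (x : M ⊗[K] B) (i : ι) :
    tbr b (LinearMap.rTensor B L x) i = L (tbr b x i) := by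
  induction x using TensorProduct.induction_on with
  | zero => simp
  | tmul m v => simp [tbr_tmul_apply, map_smul]
  | add x y hx hy => simp [map_add, hx, hy, Finsupp.add_apply]

lemma tbr_sum_repr {M B ι : Type} [AddCommGroup M] [Module K M] [AddCommGroup B]
    [Module K B] [DecidableEq ι] (b : Module.Basis ι K B) (x : M ⊗[K] B) :
    ∑ i ∈ (tbr b x).support, (tbr b x i) ⊗ₜ[K] b i = x := by
  apply (tbr b).injective
  rw [map_sum]
  have h1 : ∀ (m : M) (i : ι), tbr b (m ⊗ₜ[K] b i) = Finsupp.single i m := by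
    intro m i
    ext j
    rw [tbr_tmul_apply]
    simp [Module.Basis.repr_self, Finsupp.single_apply, eq_comm]
  simp_rw [h1]
  have := Finsupp.sum_single (tbr b x)
  rwa [Finsupp.sum] at this

/-- Tensor with a basis on the left factor. -/
def tbl {A M ι : Type} [AddCommGroup A] [Module K A] [AddCommGroup M] [Module K M]
    [DecidableEq ι] (b : Module.Basis ι K A) : A ⊗[K] M ≃ₗ[K] (ι →₀ M) :=
  (TensorProduct.congr b.repr (LinearEquiv.refl K M)).trans
    (TensorProduct.finsuppScalarLeft K M ι)

lemma tbl_tmul_apply {A M ι : Type} [AddCommGroup A] [Module K A] [AddCommGroup M]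
    [Module K M] [DecidableEq ι] (b : Module.Basis ι K A) (v : A) (m : M) (i : ι) :
    tbl b (v ⊗ₜ[K] m) i = b.repr v i • m := by
  simp [tbl]

lemma tbl_lTensor {A M N ι : Type} [AddCommGroup A] [Module K A] [AddCommGroup M]
    [Module K M] [AddCommGroup N] [Module K N] [DecidableEq ι] (b : Module.Basis ι K A)
    (L : M →ₗ[K] N) (x : A ⊗[K] M) (i : ι) :
    tbl b (LinearMap.lTensor A L x) i = L (tbl b x i) := by
  induction x using TensorProduct.induction_on with
  | zero => simp
  | tmul v m => simp [tbl_tmul_apply, map_smul]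
  | add x y hx hy => simp [map_add, hx, hy, Finsupp.add_apply]

lemma tbl_sum_repr {A M ι : Type} [AddCommGroup A] [Module K A] [AddCommGroup M]
    [Module K M] [DecidableEq ι] (b : Module.Basis ι K A) (x : A ⊗[K] M) :
    ∑ i ∈ (tbl b x).support, b i ⊗ₜ[K] (tbl b x i) = x := by
  apply (tbl b).injective
  rw [map_sum]
  have h1 : ∀ (m : M) (i : ι), tbl b (b i ⊗ₜ[K] m) = Finsupp.single i m := by
    intro m i
    ext j
    rw [tbl_tmul_apply]
    simp [Module.Basis.repr_self, Finsupp.single_apply, eq_comm]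
  simp_rw [h1]
  have := Finsupp.sum_single (tbl b x)
  rwa [Finsupp.sum] at this

lemma aux_right {M N B : Type} [AddCommGroup M] [Module K M] [AddCommGroup N]
    [Module K N] [AddCommGroup B] [Module K B] (S : Submodule K M)
    {ι : Type} (L : ι → (M →ₗ[K] N)) (hSL : ∀ m, m ∈ S ↔ ∀ i, L i m = 0)
    (x : M ⊗[K] B) (hx : ∀ i, LinearMap.rTensor B (L i) x = 0) :
    ∃ y : S ⊗[K] B, LinearMap.rTensor B S.subtype y = x := by
  classical
  set b := Module.Basis.ofVectorSpace K B with hb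
  have hm : ∀ j, tbr b x j ∈ S := by
    intro j
    rw [hSL]
    intro i
    have := tbr_rTensor b (L i) x j
    rw [hx i, map_zero] at this
    simpa using this.symm
  refine ⟨∑ j ∈ (tbr b x).support, (⟨tbr b x j, hm j⟩ : S) ⊗ₜ[K] b j, ?_⟩
  rw [map_sum]
  simp only [LinearMap.rTensor_tmul, Submodule.coe_subtype]
  exact tbr_sum_repr b x

lemma aux_left {A M N : Type} [AddCommGroup A] [Module K A] [AddCommGroup M]
    [Module K M] [AddCommGroup N] [Module K N] (T : Submodule K M)
    {ι : Type} (L : ι → (M →ₗ[K] N)) (hTL : ∀ m, m ∈ T ↔ ∀ i, L i m = 0)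
    (x : A ⊗[K] M) (hx : ∀ i, LinearMap.lTensor A (L i) x = 0) :
    ∃ y : A ⊗[K] T, LinearMap.lTensor A T.subtype y = x := by
  classical
  set b := Module.Basis.ofVectorSpace K A with hb
  have hm : ∀ j, tbl b x j ∈ T := by
    intro j
    rw [hTL]
    intro i
    have := tbl_lTensor b (L i) x j
    rw [hx i, map_zero] at this
    simpa using this.symm
  refine ⟨∑ j ∈ (tbl b x).support, b j ⊗ₜ[K] (⟨tbl b x j, hm j⟩ : T), ?_⟩
  rw [map_sum]
  simp only [LinearMap.lTensor_tmul, Submodule.coe_subtype]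
  exact tbl_sum_repr b x

end HomOuterAux

set_option maxHeartbeats 1000000 in
/-- For finite groups `G, H` and finite-dimensional representations, the
space of `K[G×H]`-homomorphisms between outer tensor products is `K`-linearly isomorphic to
the tensor product of the respective `K[G]`- and `K[H]`-homomorphism spaces. -/
theorem hom_outer_tensor_iso {K G H : Type} [Field K] [Group G] [Group H]
    [Fintype G] [Fintype H]
    {V V' W W' : Type}
    [AddCommGroup V] [Module K V] [FiniteDimensional K V]
    [AddCommGroup V'] [Module K V'] [FiniteDimensional K V']
    [AddCommGroup W] [Module K W] [FiniteDimensional K W]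
    [AddCommGroup W'] [Module K W'] [FiniteDimensional K W']
    (ρ : Representation K G V) (ρ' : Representation K G V')
    (τ : Representation K H W) (τ' : Representation K H W') :
    Nonempty
      ((equivariantHom (outerRep ρ τ) (outerRep ρ' τ'))
        ≃ₗ[K] (equivariantHom ρ ρ') ⊗[K] (equivariantHom τ τ')) := by
  classical
  let S := equivariantHom ρ ρ'
  let T := equivariantHom τ τ'
  let e := homTensorHomEquiv K V W V' W'
  have e_tmul : ∀ (a : V →ₗ[K] V') (c : W →ₗ[K] W'),
      e (a ⊗ₜ[K] c) = TensorProduct.map a c := by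
    intro a c
    show homTensorHomEquiv K V W V' W' (a ⊗ₜ[K] c) = _
    rw [homTensorHomEquiv_apply, TensorProduct.homTensorHomMap_apply]
  have houter : ∀ (g : G) (h : H), outerRep ρ τ (g, h) = TensorProduct.map (ρ g) (τ h) :=
    fun _ _ => rfl
  have houter' : ∀ (g : G) (h : H), outerRep ρ' τ' (g, h) = TensorProduct.map (ρ' g) (τ' h) :=
    fun _ _ => rfl
  have hmemS : ∀ f, f ∈ S ↔ ∀ g, f.comp (ρ g) = (ρ' g).comp f := fun f => Iff.rfl
  have hmemT : ∀ f, f ∈ T ↔ ∀ h, f.comp (τ h) = (τ' h).comp f := fun f => Iff.rfl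
  have hmemO : ∀ f, f ∈ equivariantHom (outerRep ρ τ) (outerRep ρ' τ') ↔
      ∀ p : G × H, f.comp (outerRep ρ τ p) = (outerRep ρ' τ' p).comp f := fun f => Iff.rfl
  let L : G → ((V →ₗ[K] V') →ₗ[K] (V →ₗ[K] V')) := fun g =>
    LinearMap.lcomp K V' (ρ g) - LinearMap.llcomp K V V' V' (ρ' g)
  let R : H → ((W →ₗ[K] W') →ₗ[K] (W →ₗ[K] W')) := fun h =>
    LinearMap.lcomp K W' (τ h) - LinearMap.llcomp K W W' W' (τ' h)
  have hLdef : ∀ g a, L g a = a.comp (ρ g) - (ρ' g).comp a := fun g a => rfl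
  have hRdef : ∀ h c, R h c = c.comp (τ h) - (τ' h).comp c := fun h c => rfl
  have hSL : ∀ a, a ∈ S ↔ ∀ g, L g a = 0 := by
    intro a
    rw [hmemS]
    simp only [hLdef, sub_eq_zero]
  have hTL : ∀ c, c ∈ T ↔ ∀ h, R h c = 0 := by
    intro c
    rw [hmemT]
    simp only [hRdef, sub_eq_zero]
  have keyL : ∀ (g : G) (u : (V →ₗ[K] V') ⊗[K] (W →ₗ[K] W')),
      e (LinearMap.rTensor (W →ₗ[K] W') (L g) u)
        = (e u).comp (TensorProduct.map (ρ g) (LinearMap.id : W →ₗ[K] W))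
          - (TensorProduct.map (ρ' g) (LinearMap.id : W' →ₗ[K] W')).comp (e u) := by
    intro g u
    induction u using TensorProduct.induction_on with
    | zero => simp
    | tmul a c =>
        have h1 : (TensorProduct.map a c).comp
              (TensorProduct.map (ρ g) (LinearMap.id : W →ₗ[K] W))
            = TensorProduct.map (a.comp (ρ g)) c := by
          rw [← TensorProduct.map_comp, LinearMap.comp_id]
        have h2 : (TensorProduct.map (ρ' g) (LinearMap.id : W' →ₗ[K] W')).comp
              (TensorProduct.map a c)
            = TensorProduct.map ((ρ' g).comp a) c := by
          rw [← TensorProduct.map_comp, LinearMap.id_comp]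
        rw [LinearMap.rTensor_tmul, hLdef, TensorProduct.sub_tmul, map_sub, e_tmul, e_tmul,
          e_tmul, h1, h2]
    | add u v hu hv =>
        rw [map_add, map_add, map_add, LinearMap.add_comp, LinearMap.comp_add, hu, hv]
        abel
  have keyR : ∀ (h : H) (u : (V →ₗ[K] V') ⊗[K] (W →ₗ[K] W')),
      e (LinearMap.lTensor (V →ₗ[K] V') (R h) u)
        = (e u).comp (TensorProduct.map (LinearMap.id : V →ₗ[K] V) (τ h))
          - (TensorProduct.map (LinearMap.id : V' →ₗ[K] V') (τ' h)).comp (e u) := by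
    intro h u
    induction u using TensorProduct.induction_on with
    | zero => simp
    | tmul a c =>
        have h1 : (TensorProduct.map a c).comp
              (TensorProduct.map (LinearMap.id : V →ₗ[K] V) (τ h))
            = TensorProduct.map a (c.comp (τ h)) := by
          rw [← TensorProduct.map_comp, LinearMap.comp_id]
        have h2 : (TensorProduct.map (LinearMap.id : V' →ₗ[K] V') (τ' h)).comp
              (TensorProduct.map a c)
            = TensorProduct.map a ((τ' h).comp c) := by
          rw [← TensorProduct.map_comp, LinearMap.id_comp]
        rw [LinearMap.lTensor_tmul, hRdef, TensorProduct.tmul_sub, map_sub, e_tmul, e_tmul,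
          e_tmul, h1, h2]
    | add u v hu hv =>
        rw [map_add, map_add, map_add, LinearMap.add_comp, LinearMap.comp_add, hu, hv]
        abel
  have honeτ : τ (1 : H) = (LinearMap.id : W →ₗ[K] W) := by
    rw [map_one]; rfl
  have honeτ' : τ' (1 : H) = (LinearMap.id : W' →ₗ[K] W') := by
    rw [map_one]; rfl
  have honeρ : ρ (1 : G) = (LinearMap.id : V →ₗ[K] V) := by
    rw [map_one]; rfl
  have honeρ' : ρ' (1 : G) = (LinearMap.id : V' →ₗ[K] V') := by
    rw [map_one]; rfl
  have hmem : ∀ z : S ⊗[K] T,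
      e (TensorProduct.map S.subtype T.subtype z)
        ∈ equivariantHom (outerRep ρ τ) (outerRep ρ' τ') := by
    intro z
    induction z using TensorProduct.induction_on with
    | zero => rw [map_zero, map_zero]; exact Submodule.zero_mem _
    | tmul s t =>
        rw [TensorProduct.map_tmul, hmemO]
        rintro ⟨g, h⟩
        rw [Submodule.coe_subtype, Submodule.coe_subtype, e_tmul, houter, houter',
          ← TensorProduct.map_comp, ← TensorProduct.map_comp,
          (hmemS _).mp s.2 g, (hmemT _).mp t.2 h]
    | add u v hu hv => rw [map_add, map_add]; exact Submodule.add_mem _ hu hv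
  have hinjS : Function.Injective (LinearMap.rTensor (W →ₗ[K] W') S.subtype) :=
    Module.Flat.rTensor_preserves_injective_linearMap _ S.injective_subtype
  have hinj : Function.Injective (TensorProduct.map S.subtype T.subtype) := by
    have h1 : Function.Injective (LinearMap.rTensor (↥T) S.subtype) :=
      Module.Flat.rTensor_preserves_injective_linearMap _ S.injective_subtype
    have h2 : Function.Injective (LinearMap.lTensor (V →ₗ[K] V') T.subtype) :=
      Module.Flat.lTensor_preserves_injective_linearMap _ T.injective_subtype
    have h3 : TensorProduct.map S.subtype T.subtype
        = (LinearMap.lTensor (V →ₗ[K] V') T.subtype).comp (LinearMap.rTensor (↥T) S.subtype) :=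
      (LinearMap.lTensor_comp_rTensor ↥S S.subtype T.subtype).symm
    rw [h3, LinearMap.coe_comp]
    exact h2.comp h1
  have hsurj : ∀ F ∈ equivariantHom (outerRep ρ τ) (outerRep ρ' τ'),
      ∃ z : S ⊗[K] T, e (TensorProduct.map S.subtype T.subtype z) = F := by
    intro F hF
    set x := e.symm F with hxdef
    have hex : e x = F := e.apply_symm_apply F
    have hFp : ∀ p : G × H, F.comp (outerRep ρ τ p) = (outerRep ρ' τ' p).comp F :=
      (hmemO F).mp hF
    have hxL : ∀ g, LinearMap.rTensor (W →ₗ[K] W') (L g) x = 0 := by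
      intro g
      apply e.injective
      have hg : TensorProduct.map (ρ g) (LinearMap.id : W →ₗ[K] W) = outerRep ρ τ (g, 1) := by
        rw [houter g 1, honeτ]
      have hg' : TensorProduct.map (ρ' g) (LinearMap.id : W' →ₗ[K] W')
          = outerRep ρ' τ' (g, 1) := by
        rw [houter' g 1, honeτ']
      rw [map_zero, keyL g x, hex, hg, hg', hFp (g, 1), sub_self]
    have hxR : ∀ h, LinearMap.lTensor (V →ₗ[K] V') (R h) x = 0 := by
      intro h
      apply e.injective
      have hg : TensorProduct.map (LinearMap.id : V →ₗ[K] V) (τ h) = outerRep ρ τ (1, h) := by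
        rw [houter 1 h, honeρ]
      have hg' : TensorProduct.map (LinearMap.id : V' →ₗ[K] V') (τ' h)
          = outerRep ρ' τ' (1, h) := by
        rw [houter' 1 h, honeρ']
      rw [map_zero, keyR h x, hex, hg, hg', hFp (1, h), sub_self]
    obtain ⟨y, hy⟩ := HomOuterAux.aux_right S L hSL x hxL
    have hyR : ∀ h, LinearMap.lTensor (↥S) (R h) y = 0 := by
      intro h
      apply hinjS
      rw [map_zero]
      have hcomm : (S.subtype.rTensor (W →ₗ[K] W')).comp ((R h).lTensor ↥S)
          = ((R h).lTensor (V →ₗ[K] V')).comp (S.subtype.rTensor (W →ₗ[K] W')) := by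
        rw [LinearMap.rTensor_comp_lTensor, LinearMap.lTensor_comp_rTensor]
      calc (S.subtype.rTensor (W →ₗ[K] W')) (((R h).lTensor ↥S) y)
          = ((R h).lTensor (V →ₗ[K] V')) ((S.subtype.rTensor (W →ₗ[K] W')) y) := by
            rw [← LinearMap.comp_apply, hcomm, LinearMap.comp_apply]
        _ = 0 := by rw [hy]; exact hxR h
    obtain ⟨z, hz⟩ := HomOuterAux.aux_left T R hTL y hyR
    refine ⟨z, ?_⟩
    rw [← hex]
    congr 1
    rw [← hy, ← hz, ← LinearMap.comp_apply, LinearMap.rTensor_comp_lTensor]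
  let Φ : S ⊗[K] T →ₗ[K] ↥(equivariantHom (outerRep ρ τ) (outerRep ρ' τ')) :=
    (e.toLinearMap.comp (TensorProduct.map S.subtype T.subtype)).codRestrict _ hmem
  have hbij : Function.Bijective Φ := by
    constructor
    · intro z z' hzz
      apply hinj
      apply e.injective
      exact congrArg Subtype.val hzz
    · rintro ⟨F, hF⟩
      obtain ⟨z, hz⟩ := hsurj F hF
      exact ⟨z, Subtype.ext hz⟩
  exact ⟨(LinearEquiv.ofBijective Φ hbij).symm⟩

end
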